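/- arXiv:1609.09777 — 3 statements merged into one kernel-verified Lean document; each statement's English description precedes it below -/
import Mathlib

section
/- Let (u_i) be a sequence of complex numbers such that n^{-1/2} max_{1≤i≤n} |u_i| → 0 as n → ∞, and such that the limit S = lim_{n→∞} (1/n) ∑_{i=1}^n u_i exists and is finite. Then lim_{n→∞} ∏_{i=1}^n (1 + u_i/n) = e^S. -/
open Filter Finset

/-!
Since `log (1 + z) = z + O(‖z‖²)`, the logarithm of `∏ (1 + u i / n)` differs from
`(1/n) ∑ u i` by at most `∑ ‖u i / n‖² ≤ n · (max ‖u i‖ / n)² = (max ‖u i‖ / √n)²`, which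
tends to `0`; exponentiating gives `e^S`.
-/

namespace Complex

lemma norm_log_one_add_sub_self_le_sq {z : ℂ} (hz : ‖z‖ ≤ 1 / 2) :
    ‖log (1 + z) - z‖ ≤ ‖z‖ ^ 2 := by
  have hinv : (1 - ‖z‖)⁻¹ ≤ 2 := by
    rw [inv_le_comm₀ (by linarith) two_pos]
    linarith
  calc ‖log (1 + z) - z‖ ≤ ‖z‖ ^ 2 * (1 - ‖z‖)⁻¹ / 2 :=
        norm_log_one_add_sub_self_le (hz.trans_lt one_half_lt_one)
    _ ≤ ‖z‖ ^ 2 * 2 / 2 := by gcongr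
    _ = ‖z‖ ^ 2 := by ring

variable {ι : Type*}

lemma exp_sum_log_one_add {s : Finset ι} {z : ι → ℂ} (hz : ∀ i ∈ s, ‖z i‖ < 1) :
    exp (∑ i ∈ s, log (1 + z i)) = ∏ i ∈ s, (1 + z i) := by
  rw [exp_sum]
  refine prod_congr rfl fun i hi => exp_log fun h => ?_
  have : z i = -1 := by linear_combination h
  simpa [this] using hz i hi

lemma norm_sum_log_one_add_sub_sum_le {s : Finset ι} {z : ι → ℂ}
    (hz : ∀ i ∈ s, ‖z i‖ ≤ 1 / 2) :
    ‖∑ i ∈ s, log (1 + z i) - ∑ i ∈ s, z i‖ ≤ ∑ i ∈ s, ‖z i‖ ^ 2 := by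
  rw [← sum_sub_distrib]
  exact (norm_sum_le _ _).trans (sum_le_sum fun i hi => norm_log_one_add_sub_self_le_sq (hz i hi))

theorem tendsto_prod_one_add_of_tendsto_sum {α : Type*} {l : Filter α} {s : α → Finset ι}
    {z : α → ι → ℂ} {S : ℂ} (hsum : Tendsto (fun a => ∑ i ∈ s a, z a i) l (nhds S))
    (hsq : Tendsto (fun a => ∑ i ∈ s a, ‖z a i‖ ^ 2) l (nhds 0)) :
    Tendsto (fun a => ∏ i ∈ s a, (1 + z a i)) l (nhds (exp S)) := by
  have hsmall : ∀ᶠ a in l, ∀ i ∈ s a, ‖z a i‖ ≤ 1 / 2 := by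
    filter_upwards [hsq.eventually (eventually_le_nhds (by norm_num : (0 : ℝ) < (1 / 2) ^ 2))]
      with a ha i hi
    exact (pow_le_pow_iff_left₀ (norm_nonneg _) (by norm_num) two_ne_zero).1 <|
      (single_le_sum (fun j _ => sq_nonneg ‖z a j‖) hi).trans ha
  have hlog : Tendsto (fun a => ∑ i ∈ s a, log (1 + z a i)) l (nhds S) := by
    have herr : Tendsto (fun a => ∑ i ∈ s a, log (1 + z a i) - ∑ i ∈ s a, z a i) l (nhds 0) :=
      squeeze_zero_norm' (hsmall.mono fun a => norm_sum_log_one_add_sub_sum_le) hsq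
    simpa using herr.add hsum
  refine hlog.cexp.congr' ?_
  filter_upwards [hsmall] with a ha
  exact exp_sum_log_one_add fun i hi => (ha i hi).trans_lt one_half_lt_one

lemma sum_norm_div_card_sq_le (s : Finset ι) (u : ι → ℂ) :
    ∑ i ∈ s, ‖u i / #s‖ ^ 2 ≤ (((s.sup fun i => ‖u i‖₊ : NNReal) : ℝ) / Real.sqrt #s) ^ 2 := by
  set M : ℝ := ((s.sup fun i => ‖u i‖₊ : NNReal) : ℝ)
  calc ∑ i ∈ s, ‖u i / #s‖ ^ 2 ≤ ∑ i ∈ s, (M / #s) ^ 2 := by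
        refine sum_le_sum fun i hi => ?_
        rw [norm_div, norm_natCast]
        gcongr
        exact_mod_cast le_sup (f := fun i => ‖u i‖₊) hi
    _ = (M / Real.sqrt #s) ^ 2 := by
        rw [sum_const, nsmul_eq_mul, div_pow, div_pow, Real.sq_sqrt (Nat.cast_nonneg _)]
        rcases eq_or_ne (#s : ℝ) 0 with h | h
        · simp [h]
        · field_simp

end Complex

/-- If `n^{-1/2} · max_{1 ≤ i ≤ n} |u i| → 0` and `(1/n) ∑_{i=1}^n u i → S`,
then `∏_{i=1}^n (1 + u i / n) → e^S`. -/
theorem product_exp_limit (u : ℕ → ℂ) (S : ℂ)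
    (hmax : Tendsto (fun n : ℕ =>
      (((Finset.range n).sup fun i => ‖u i‖₊ : NNReal) : ℝ) / Real.sqrt n) atTop (nhds 0))
    (hsum : Tendsto (fun n : ℕ => (1 / (n : ℂ)) * ∑ i ∈ Finset.range n, u i) atTop (nhds S)) :
    Tendsto (fun n : ℕ => ∏ i ∈ Finset.range n, (1 + u i / (n : ℂ))) atTop
      (nhds (Complex.exp S)) := by
  refine Complex.tendsto_prod_one_add_of_tendsto_sum ?_ ?_
  · refine hsum.congr fun n => ?_
    simp only [mul_sum, one_div, inv_mul_eq_div]
  · refine squeeze_zero (fun n => by positivity) (fun n => ?_) (by simpa using hmax.pow 2)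
    simpa using Complex.sum_norm_div_card_sq_le (range n) u
end

section
/- Fix t ∈ ℝ. For each n, let λ_{1,n}, …, λ_{n,n} ≥ 0 satisfy max_k λ_{k,n} = o(n^{1/4}) and (1/(4n)) ∑_{k=1}^n λ_{k,n}² → σ². Then ∏_{k=1}^n cos(t λ_{k,n} / (2√n)) → exp(−σ² t² / 2) as n → ∞. -/
/-!
Write `x_{k,n} = t λ_{k,n} / (2√n)`. The growth condition makes `max_k |x_{k,n}| → 0`, so
eventually every cosine is positive and `log cos x = -x²/2 + O(x⁴)`. Summing, the error is at most
`3 (max_k x_{k,n})² ∑_k x_{k,n}² → 0`, while `∑_k x_{k,n}² = t² (1/(4n)) ∑_k λ_{k,n}² → t² σ²`.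
Hence `∑_k log cos x_{k,n} → -σ² t² / 2`, and exponentiating gives the claim.
-/

open Filter Finset Topology

namespace Real

theorem abs_log_cos_add_sq_div_two_le {x : ℝ} (hx : |x| ≤ 1 / 2) :
    |log (cos x) + x ^ 2 / 2| ≤ 3 * x ^ 4 := by
  have hx2 : x ^ 2 ≤ 1 / 4 := by nlinarith [abs_nonneg x, sq_abs x]
  have hcos : |cos x - (1 - x ^ 2 / 2)| ≤ x ^ 4 * (5 / 96) := by
    simpa [pow_abs, abs_of_nonneg (by positivity : (0 : ℝ) ≤ x ^ 4)] using
      cos_bound (hx.trans (by norm_num))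
  obtain ⟨hcos_lo, hcos_hi⟩ := abs_le.1 hcos
  have hc : 0 < cos x := by nlinarith [sq_nonneg x]
  have hlog_hi : log (cos x) ≤ cos x - 1 := log_le_sub_one_of_pos hc
  have hlog_lo : 1 - (cos x)⁻¹ ≤ log (cos x) := by
    linarith [log_inv (cos x) ▸ log_le_sub_one_of_pos (inv_pos.2 hc)]
  have hinv : (cos x)⁻¹ ≤ 1 + x ^ 2 / 2 + 3 * x ^ 4 := by
    have hpos : 0 ≤ 1 + x ^ 2 / 2 + 3 * x ^ 4 := by positivity
    rw [inv_le_iff_one_le_mul₀ hc]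
    nlinarith [mul_le_mul_of_nonneg_left hcos_lo hpos, pow_nonneg (sq_nonneg x) 3,
      mul_le_mul_of_nonneg_left hx2 (pow_nonneg (sq_nonneg x) 3)]
  rw [abs_le]
  constructor <;> nlinarith [sq_nonneg x, sq_nonneg (x ^ 2)]

end Real

section TriangularArray

variable {α ι : Type*} {L : Filter α} {s : α → Finset ι} {a : α → ι → ℝ} {B : α → ℝ} {v : ℝ}

theorem tendsto_sum_log_cos_of_sum_sq (hB : Tendsto B L (𝓝 0))
    (haB : ∀ n, ∀ k ∈ s n, |a n k| ≤ B n) (hv : Tendsto (fun n => ∑ k ∈ s n, a n k ^ 2) L (𝓝 v)) :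
    Tendsto (fun n => ∑ k ∈ s n, Real.log (Real.cos (a n k))) L (𝓝 (-v / 2)) := by
  have hsmall : ∀ᶠ n in L, B n ≤ 1 / 2 := hB.eventually (ge_mem_nhds (by norm_num))
  have herr :
      Tendsto (fun n => ∑ k ∈ s n, (Real.log (Real.cos (a n k)) + a n k ^ 2 / 2)) L (𝓝 0) := by
    have hbound : Tendsto (fun n => 3 * B n ^ 2 * ∑ k ∈ s n, a n k ^ 2) L (𝓝 0) := by
      simpa using ((hB.pow 2).const_mul 3).mul hv
    refine squeeze_zero_norm' ?_ hbound
    filter_upwards [hsmall] with n hn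
    rw [mul_sum]
    refine (norm_sum_le _ _).trans (sum_le_sum fun k hk => ?_)
    have hak := haB n k hk
    have hsq : a n k ^ 2 ≤ B n ^ 2 := sq_le_sq' (abs_le.1 hak).1 (abs_le.1 hak).2
    calc ‖Real.log (Real.cos (a n k)) + a n k ^ 2 / 2‖ ≤ 3 * a n k ^ 4 :=
          Real.abs_log_cos_add_sq_div_two_le (hak.trans hn)
      _ ≤ 3 * B n ^ 2 * a n k ^ 2 := by nlinarith [sq_nonneg (a n k)]
  convert herr.sub (hv.div_const 2) using 2 with n
  · rw [sum_add_distrib, ← sum_div]; ring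
  · ring

theorem tendsto_prod_cos_of_sum_sq (hB : Tendsto B L (𝓝 0))
    (haB : ∀ n, ∀ k ∈ s n, |a n k| ≤ B n) (hv : Tendsto (fun n => ∑ k ∈ s n, a n k ^ 2) L (𝓝 v)) :
    Tendsto (fun n => ∏ k ∈ s n, Real.cos (a n k)) L (𝓝 (Real.exp (-v / 2))) := by
  refine ((Real.continuous_exp.tendsto _).comp (tendsto_sum_log_cos_of_sum_sq hB haB hv)).congr' ?_
  filter_upwards [hB.eventually (ge_mem_nhds one_pos)] with n hn
  rw [Function.comp_apply, Real.exp_sum]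
  exact prod_congr rfl fun k hk =>
    Real.exp_log (Real.cos_pos_of_le_one ((haB n k hk).trans hn))

end TriangularArray

theorem tendsto_div_sqrt_of_tendsto_div_rpow {f : ℕ → ℝ} {p : ℝ} (hf : ∀ n, 0 ≤ f n)
    (hp : p ≤ 1 / 2) (h : Tendsto (fun n : ℕ => f n / (n : ℝ) ^ p) atTop (𝓝 0)) :
    Tendsto (fun n : ℕ => f n / Real.sqrt n) atTop (𝓝 0) := by
  refine squeeze_zero' (Eventually.of_forall fun n => div_nonneg (hf n) (Real.sqrt_nonneg _)) ?_ h
  filter_upwards [eventually_ge_atTop 1] with n hn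
  have hn1 : (1 : ℝ) ≤ n := by exact_mod_cast hn
  rw [Real.sqrt_eq_rpow]
  exact div_le_div_of_nonneg_left (hf n) (by positivity) (Real.rpow_le_rpow_of_exponent_le hn1 hp)

theorem prod_cos_tendsto_gaussian_charFun_general
    (t : ℝ) (l : ℕ → ℕ → ℝ) (σ2 : ℝ)
    (hmax : Tendsto (fun n : ℕ =>
      (((Finset.range n).sup fun k => ‖l n k‖₊ : NNReal) : ℝ) / (n : ℝ) ^ ((1 : ℝ) / 4))
      atTop (nhds 0))
    (hvar : Tendsto (fun n : ℕ => (1 / (4 * (n : ℝ))) * ∑ k ∈ Finset.range n, (l n k) ^ 2)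
      atTop (nhds σ2)) :
    Tendsto (fun n : ℕ => ∏ k ∈ Finset.range n, Real.cos (t * l n k / (2 * Real.sqrt n)))
      atTop (nhds (Real.exp (-(σ2 * t ^ 2) / 2))) := by
  set M : ℕ → ℝ := fun n => ((Finset.range n).sup fun k => ‖l n k‖₊ : NNReal)
  have hM : Tendsto (fun n => |t| / 2 * (M n / Real.sqrt n)) atTop (𝓝 0) := by
    simpa using ((tendsto_div_sqrt_of_tendsto_div_rpow (fun n => (NNReal.coe_nonneg _))
      (by norm_num) hmax).const_mul (|t| / 2))
  have hbound : ∀ n, ∀ k ∈ range n,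
      |t * l n k / (2 * Real.sqrt n)| ≤ |t| / 2 * (M n / Real.sqrt n) := by
    intro n k hk
    have hlM : |l n k| ≤ M n := NNReal.coe_le_coe.2 (le_sup (f := fun k => ‖l n k‖₊) hk)
    rw [abs_div, abs_mul, abs_of_nonneg (by positivity : 0 ≤ 2 * Real.sqrt n)]
    calc |t| * |l n k| / (2 * Real.sqrt n) ≤ |t| * M n / (2 * Real.sqrt n) := by gcongr
      _ = |t| / 2 * (M n / Real.sqrt n) := by ring
  have hsq : ∀ n, ∑ k ∈ range n, (t * l n k / (2 * Real.sqrt n)) ^ 2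
      = t ^ 2 * ((1 / (4 * (n : ℝ))) * ∑ k ∈ range n, (l n k) ^ 2) := by
    intro n
    simp_rw [mul_sum, div_pow, mul_pow, Real.sq_sqrt n.cast_nonneg]
    exact sum_congr rfl fun k _ => by ring
  convert tendsto_prod_cos_of_sum_sq hM hbound
    ((hvar.const_mul (t ^ 2)).congr fun n => (hsq n).symm) using 3
  ring

/-- If `max_k λ_{k,n} = o(n^{1/4})` and `(1/(4n)) ∑_k λ_{k,n}² → σ²`, then for every fixed
`t`, `∏_{k<n} cos(t λ_{k,n}/(2√n)) → exp(−σ² t²/2)`. -/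
theorem prod_cos_tendsto_gaussian_charFun
    (t : ℝ) (l : ℕ → ℕ → ℝ) (σ2 : ℝ)
    (hpos : ∀ n k, k < n → 0 ≤ l n k)
    (hmax : Tendsto (fun n : ℕ =>
      (((Finset.range n).sup fun k => ‖l n k‖₊ : NNReal) : ℝ) / (n : ℝ) ^ ((1 : ℝ) / 4))
      atTop (nhds 0))
    (hvar : Tendsto (fun n : ℕ => (1 / (4 * (n : ℝ))) * ∑ k ∈ Finset.range n, (l n k) ^ 2)
      atTop (nhds σ2)) :
    Tendsto (fun n : ℕ => ∏ k ∈ Finset.range n, Real.cos (t * l n k / (2 * Real.sqrt n)))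
      atTop (nhds (Real.exp (-(σ2 * t ^ 2) / 2))) :=
  prod_cos_tendsto_gaussian_charFun_general t l σ2 hmax hvar
end

section
/- For each n, let A^{(n)} be a random n×n matrix with entries A_{ij} = a_{ij}/√(W_n) for |i−j| ≤ W_n and A_{ij} = 0 otherwise, where the a_{ij} are i.i.d. real random variables satisfying E[e^{δ|a_{11}|}] < ∞ for some δ > 0, and W_n = o(n^{1/2}) with W_n ≥ 1. Then n^{-1/4} ‖A^{(n)}‖_op → 0 almost surely as n → ∞. -/
open MeasureTheory ProbabilityTheory Filter Matrix
open Real Finset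

/-! The operator norm of a real matrix is at most its largest absolute row or column sum (Schur
test). A row of `A⁽ⁿ⁾` sums to `1 / √Wₙ` times a sum of at most `2 Wₙ + 1` i.i.d. copies of
`|a₁₁|`, which by the Chernoff bound exceeds `K (Wₙ + log n)` with probability at most `n⁻³` for a
suitable `K`. A union bound over the `2 n` rows and columns and Borel–Cantelli give
`‖A⁽ⁿ⁾‖ ≤ K (Wₙ + log n) / √Wₙ` for all large `n` almost surely, and
`(Wₙ + log n) / (√Wₙ n^{1/4}) ≤ √(Wₙ / √n) + log n / n^{1/4} → 0`. -/

theorem Matrix.norm_toEuclideanCLM_le_of_sum_abs_le {ι : Type*} [Fintype ι] [DecidableEq ι]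
    (A : Matrix ι ι ℝ) {r : ℝ} (hr : 0 ≤ r)
    (hrow : ∀ i, ∑ j, |A i j| ≤ r) (hcol : ∀ j, ∑ i, |A i j| ≤ r) :
    ‖toEuclideanCLM (𝕜 := ℝ) A‖ ≤ r := by
  refine ContinuousLinearMap.opNorm_le_bound _ hr fun x => ?_
  have hx : ‖x‖ ^ 2 = ∑ j, x j ^ 2 := by
    simp [EuclideanSpace.norm_eq, sq_abs, Real.sq_sqrt (sum_nonneg fun j _ => sq_nonneg (x j))]
  -- weighted Cauchy–Schwarz with weights `|A i j|`
  have hrow_sq : ∀ i, (∑ j, A i j * x j) ^ 2 ≤ r * ∑ j, |A i j| * x j ^ 2 := fun i =>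
    calc (∑ j, A i j * x j) ^ 2 ≤ (∑ j, |A i j| * |x j|) ^ 2 := by
          rw [← sq_abs]
          gcongr
          simpa only [abs_mul] using abs_sum_le_sum_abs (fun j => A i j * x j) univ
      _ ≤ (∑ j, |A i j|) * ∑ j, |A i j| * x j ^ 2 :=
          sum_sq_le_sum_mul_sum_of_sq_le_mul _ (fun j _ => abs_nonneg _)
            (fun j _ => by positivity) fun j _ => le_of_eq <| by rw [mul_pow, sq_abs (x j)]; ring
      _ ≤ r * ∑ j, |A i j| * x j ^ 2 := by gcongr; exact hrow i
  have key : ‖toEuclideanCLM (𝕜 := ℝ) A x‖ ^ 2 ≤ (r * ‖x‖) ^ 2 :=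
    calc ‖toEuclideanCLM (𝕜 := ℝ) A x‖ ^ 2 = ∑ i, (∑ j, A i j * x j) ^ 2 := by
          simp [EuclideanSpace.norm_eq, sq_abs, Real.sq_sqrt (sum_nonneg fun i _ => sq_nonneg _),
            mulVec, dotProduct]
      _ ≤ ∑ i, r * ∑ j, |A i j| * x j ^ 2 := sum_le_sum fun i _ => hrow_sq i
      _ = r * ∑ j, (∑ i, |A i j|) * x j ^ 2 := by
          rw [← mul_sum, sum_comm]; simp_rw [sum_mul]
      _ ≤ r * ∑ j, r * x j ^ 2 := by gcongr with j; exact hcol j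
      _ = (r * ‖x‖) ^ 2 := by rw [← mul_sum, ← hx]; ring
  exact (pow_le_pow_iff_left₀ (norm_nonneg _) (by positivity) two_ne_zero).mp key

def band (n w i : ℕ) : Finset ℕ :=
  (range n).filter fun j => |(i : ℤ) - j| ≤ w

theorem card_band_le (n w i : ℕ) : #(band n w i) ≤ 2 * w + 1 := by
  have hsub : (band n w i).map Nat.castEmbedding ⊆ Icc ((i : ℤ) - w) (i + w) := by
    intro j hj
    obtain ⟨j, hj', rfl⟩ := mem_map.mp hj
    have := abs_le.mp (mem_filter.mp hj').2
    simp only [Nat.castEmbedding_apply, mem_Icc]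
    omega
  have := card_le_card hsub
  rw [card_map, Int.card_Icc] at this
  omega

theorem sum_fin_ite_band (n w i : ℕ) (f : ℕ → ℝ) :
    ∑ j : Fin n, (if |(i : ℤ) - (j : ℕ)| ≤ w then f j else 0) = ∑ j ∈ band n w i, f j := by
  rw [Fin.sum_univ_eq_sum_range (fun j => if |(i : ℤ) - j| ≤ w then f j else 0), band, sum_filter]

section BandMatrix

variable {n w : ℕ} {A : Matrix (Fin n) (Fin n) ℝ} {b : ℕ → ℕ → ℝ} {c : ℝ}

theorem sum_abs_row_of_band
    (hA : ∀ i j, A i j = if |(i : ℤ) - (j : ℤ)| ≤ (w : ℤ) then b i j / c else 0) (i : Fin n) :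
    ∑ j, |A i j| = (∑ j ∈ band n w i, |b i j|) / |c| := by
  have habs : ∀ j : Fin n, |A i j| = if |(i : ℤ) - (j : ℕ)| ≤ w then |b i j| / |c| else 0 :=
    fun j => by rw [hA]; split_ifs <;> simp [abs_div]
  simp only [habs, sum_div]
  exact sum_fin_ite_band n w i fun j => |b i j| / |c|

theorem sum_abs_col_of_band
    (hA : ∀ i j, A i j = if |(i : ℤ) - (j : ℤ)| ≤ (w : ℤ) then b i j / c else 0) (j : Fin n) :
    ∑ i, |A i j| = (∑ i ∈ band n w j, |b i j|) / |c| :=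
  sum_abs_row_of_band (A := Aᵀ) (b := fun i j => b j i)
    (fun i j => by rw [transpose_apply, hA, abs_sub_comm]) j

theorem norm_toEuclideanCLM_le_of_band
    (hA : ∀ i j, A i j = if |(i : ℤ) - (j : ℤ)| ≤ (w : ℤ) then b i j / c else 0)
    {t : ℝ} (ht : 0 ≤ t) (hrow : ∀ i < n, ∑ j ∈ band n w i, |b i j| ≤ t)
    (hcol : ∀ j < n, ∑ i ∈ band n w j, |b i j| ≤ t) :
    ‖toEuclideanCLM (𝕜 := ℝ) A‖ ≤ t / |c| := by
  refine A.norm_toEuclideanCLM_le_of_sum_abs_le (by positivity) (fun i => ?_) (fun j => ?_)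
  · rw [sum_abs_row_of_band hA]
    gcongr
    exact hrow i i.isLt
  · rw [sum_abs_col_of_band hA]
    gcongr
    exact hcol j j.isLt

end BandMatrix

theorem exp_neg_mul_mul_pow_le {M : ℝ} (hM : 1 ≤ M) {n w : ℕ} (hn : 1 ≤ n) (hw : 1 ≤ w) :
    exp (-(3 * (log M + 1) * (w + log n))) * M ^ (2 * w + 1) ≤ 1 / (n : ℝ) ^ 3 := by
  have hL : 0 ≤ log M := log_nonneg hM
  have hl : 0 ≤ log n := log_natCast_nonneg n
  have hw' : (1 : ℝ) ≤ w := by exact_mod_cast hw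
  have hpow : M ^ (2 * w + 1) = exp ((2 * w + 1 : ℕ) * log M) := by
    rw [exp_nat_mul, exp_log (by linarith)]
  have hn3 : 1 / (n : ℝ) ^ 3 = exp (-((3 : ℕ) * log n)) := by
    rw [exp_neg, exp_nat_mul, exp_log (by exact_mod_cast hn), one_div]
  rw [hpow, hn3, ← exp_add, exp_le_exp]
  push_cast
  nlinarith [mul_nonneg hL (sub_nonneg.mpr hw'), mul_nonneg hL hl]

theorem summable_natCast_mul_exp_neg_mul_mul_pow {M : ℝ} (hM : 1 ≤ M) {W : ℕ → ℕ}
    (hW : ∀ n, 1 ≤ W n) :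
    Summable fun n : ℕ =>
      n * (exp (-(3 * (log M + 1) * (W n + log n))) * M ^ (2 * W n + 1)) := by
  refine (Real.summable_one_div_nat_pow.mpr one_lt_two).of_nonneg_of_le (fun n => by positivity)
    fun n => ?_
  rcases Nat.eq_zero_or_pos n with rfl | hn
  · simp
  calc _ ≤ (n : ℝ) * (1 / (n : ℝ) ^ 3) := by gcongr; exact exp_neg_mul_mul_pow_le hM hn (hW n)
    _ = 1 / (n : ℝ) ^ 2 := by field_simp

theorem tendsto_add_log_div_sqrt_div_rpow {W : ℕ → ℕ} (hW : ∀ n, 1 ≤ W n)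
    (hWo : Tendsto (fun n : ℕ => (W n : ℝ) / √n) atTop (nhds 0)) :
    Tendsto (fun n : ℕ => (W n + log n) / √(W n) / (n : ℝ) ^ ((1 : ℝ) / 4)) atTop (nhds 0) := by
  have hquarter (n : ℕ) : √(√n) = (n : ℝ) ^ ((1 : ℝ) / 4) := by
    rw [sqrt_eq_rpow, sqrt_eq_rpow, ← rpow_mul (Nat.cast_nonneg n)]
    norm_num
  have hsqrt : Tendsto (fun n : ℕ => √(W n) / (n : ℝ) ^ ((1 : ℝ) / 4)) atTop (nhds 0) := by
    have := (continuous_sqrt.tendsto 0).comp hWo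
    simpa only [Function.comp_def, sqrt_div' _ (sqrt_nonneg _), hquarter, sqrt_zero] using this
  have hlog : Tendsto (fun n : ℕ => log n / (n : ℝ) ^ ((1 : ℝ) / 4)) atTop (nhds 0) :=
    (isLittleO_log_rpow_atTop (by norm_num)).tendsto_div_nhds_zero.comp
      tendsto_natCast_atTop_atTop
  refine squeeze_zero (fun n => by positivity) (fun n => ?_)
    (by simpa only [add_zero] using hsqrt.add hlog)
  have hW1 : (1 : ℝ) ≤ √(W n) := one_le_sqrt.mpr (by exact_mod_cast hW n)
  rw [add_div, add_div, div_sqrt]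
  gcongr
  exact div_le_self (log_natCast_nonneg n) hW1

def heavyRowEvent {Ω : Type*} (b : ℕ → ℕ → Ω → ℝ) (n w : ℕ) (t : ℝ) : Set Ω :=
  {ω | ∃ i < n, t ≤ ∑ j ∈ band n w i, |b i j ω|}

theorem notMem_heavyRowEvent_iff {Ω : Type*} {b : ℕ → ℕ → Ω → ℝ} {n w : ℕ} {t : ℝ} {ω : Ω} :
    ω ∉ heavyRowEvent b n w t ↔ ∀ i < n, ∑ j ∈ band n w i, |b i j ω| < t := by
  simp [heavyRowEvent]

section HeavyRows

variable {Ω ι : Type*} [MeasurableSpace Ω] {μ : Measure Ω}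

theorem ProbabilityTheory.iIndepFun.measureReal_sum_ge_le_exp_mul_pow {X : ι → Ω → ℝ} (hindep : iIndepFun X μ)
    (hmeas : ∀ i, Measurable (X i)) {δ M : ℝ} (hδ : 0 ≤ δ)
    (hint : ∀ i, Integrable (fun ω => exp (δ * X i ω)) μ) (hmgf : ∀ i, mgf (X i) μ δ ≤ M)
    (s : Finset ι) (t : ℝ) :
    μ.real {ω | t ≤ ∑ i ∈ s, X i ω} ≤ exp (-δ * t) * M ^ #s := by
  have := hindep.isProbabilityMeasure
  calc μ.real {ω | t ≤ ∑ i ∈ s, X i ω} ≤ exp (-δ * t) * mgf (∑ i ∈ s, X i) μ δ := by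
        simpa only [Finset.sum_apply] using measure_ge_le_exp_mul_mgf t hδ
          (hindep.integrable_exp_mul_sum hmeas fun i _ => hint i)
    _ ≤ exp (-δ * t) * M ^ #s := by
        rw [hindep.mgf_sum hmeas, ← prod_const]
        gcongr
        exacts [fun _ _ => mgf_nonneg, hmgf _]

theorem measure_heavyRowEvent_le {b : ℕ → ℕ → Ω → ℝ} (hindep : ∀ i, iIndepFun (b i) μ)
    (hmeas : ∀ i j, Measurable (b i j)) {δ M : ℝ} (hδ : 0 ≤ δ) (hM : 1 ≤ M)
    (hint : ∀ i j, Integrable (fun ω => exp (δ * |b i j ω|)) μ)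
    (hmgf : ∀ i j, ∫ ω, exp (δ * |b i j ω|) ∂μ ≤ M) (n w : ℕ) (t : ℝ) :
    μ (heavyRowEvent b n w t) ≤ n * ENNReal.ofReal (exp (-δ * t) * M ^ (2 * w + 1)) := by
  have hrow : ∀ i, μ {ω | t ≤ ∑ j ∈ band n w i, |b i j ω|} ≤
      ENNReal.ofReal (exp (-δ * t) * M ^ (2 * w + 1)) := fun i => by
    have hindep_abs : iIndepFun (fun j ω => |b i j ω|) μ :=
      (hindep i).comp (fun _ x => |x|) fun _ => measurable_abs
    have := (hindep i).isProbabilityMeasure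
    rw [← ofReal_measureReal]
    gcongr
    calc _ ≤ exp (-δ * t) * M ^ #(band n w i) :=
          hindep_abs.measureReal_sum_ge_le_exp_mul_pow (fun j => (hmeas i j).abs) hδ
            (hint i) (hmgf i) _ t
      _ ≤ exp (-δ * t) * M ^ (2 * w + 1) := by gcongr; exact card_band_le n w i
  calc μ (heavyRowEvent b n w t)
      ≤ μ (⋃ i ∈ range n, {ω | t ≤ ∑ j ∈ band n w i, |b i j ω|}) :=
        measure_mono fun ω ⟨i, hi, h⟩ => Set.mem_biUnion (mem_range.mpr hi) h
    _ ≤ ∑ i ∈ range n, μ {ω | t ≤ ∑ j ∈ band n w i, |b i j ω|} := measure_biUnion_finset_le _ _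
    _ ≤ n * ENNReal.ofReal (exp (-δ * t) * M ^ (2 * w + 1)) := by
        refine (sum_le_sum fun i _ => hrow i).trans_eq ?_
        rw [sum_const, card_range, nsmul_eq_mul]

-- The constant `3 * (log M + 1) / δ` makes the Chernoff bound of one row at most `n⁻³`.
theorem ae_eventually_notMem_heavyRowEvent {b : ℕ → ℕ → Ω → ℝ} (hindep : ∀ i, iIndepFun (b i) μ)
    (hmeas : ∀ i j, Measurable (b i j)) {δ M : ℝ} (hδ : 0 < δ) (hM : 1 ≤ M)
    (hint : ∀ i j, Integrable (fun ω => exp (δ * |b i j ω|)) μ)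
    (hmgf : ∀ i j, ∫ ω, exp (δ * |b i j ω|) ∂μ ≤ M) {W : ℕ → ℕ} (hW : ∀ n, 1 ≤ W n) :
    ∀ᵐ ω ∂μ, ∀ᶠ n in atTop,
      ω ∉ heavyRowEvent b n (W n) (3 * (log M + 1) / δ * (W n + log n)) := by
  refine ae_eventually_notMem (ne_top_of_le_ne_top ?_ (ENNReal.tsum_le_tsum fun n =>
    measure_heavyRowEvent_le hindep hmeas hδ.le hM hint hmgf n (W n) _))
  simp_rw [← ENNReal.ofReal_natCast, ← ENNReal.ofReal_mul (Nat.cast_nonneg _)]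
  rw [← ENNReal.ofReal_tsum_of_nonneg (fun n => by positivity)]
  · exact ENNReal.ofReal_ne_top
  convert summable_natCast_mul_exp_neg_mul_mul_pow hM hW using 4 with n
  field_simp

end HeavyRows

/-- For random band matrices `A^{(n)}_{ij} = a_{ij}/√Wₙ` (for `|i−j| ≤ Wₙ`, zero otherwise)
with i.i.d. entries having an exponential moment, and bandwidth `Wₙ = o(√n)`, `Wₙ ≥ 1`,
the operator norm satisfies `n^{-1/4} ‖A^{(n)}‖_op → 0` almost surely. -/
theorem band_matrix_opNorm_small
    {Ω : Type*} [MeasurableSpace Ω] (μ : Measure Ω) [IsProbabilityMeasure μ]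
    (a : ℕ → ℕ → Ω → ℝ)
    (hmeas : ∀ i j, Measurable (a i j))
    (hindep : iIndepFun (fun q : ℕ × ℕ => a q.1 q.2) μ)
    (hident : ∀ i j, IdentDistrib (a i j) (a 0 0) μ μ)
    (hexp : ∃ δ : ℝ, 0 < δ ∧ Integrable (fun ω => Real.exp (δ * |a 0 0 ω|)) μ)
    (W : ℕ → ℕ) (hW1 : ∀ n, 1 ≤ W n)
    (hWo : Tendsto (fun n : ℕ => (W n : ℝ) / Real.sqrt n) atTop (nhds 0))
    (A : (n : ℕ) → Ω → Matrix (Fin n) (Fin n) ℝ)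
    (hA : ∀ n ω i j, A n ω i j =
      if |(i : ℤ) - (j : ℤ)| ≤ (W n : ℤ) then a (i : ℕ) (j : ℕ) ω / Real.sqrt (W n) else 0) :
    ∀ᵐ ω ∂μ, Tendsto (fun n : ℕ =>
        ‖Matrix.toEuclideanCLM (𝕜 := ℝ) (A n ω)‖ / (n : ℝ) ^ ((1 : ℝ) / 4))
      atTop (nhds 0) := by
  obtain ⟨δ, hδ, hint⟩ := hexp
  set M := ∫ ω, exp (δ * |a 0 0 ω|) ∂μ
  have hM : 1 ≤ M := by
    simpa using integral_mono (integrable_const 1) hint fun ω => one_le_exp (by positivity)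
  have hentry (i j : ℕ) :
      IdentDistrib (fun ω => exp (δ * |a i j ω|)) (fun ω => exp (δ * |a 0 0 ω|)) μ μ :=
    (hident i j).comp (u := fun x => exp (δ * |x|)) (by fun_prop)
  have hrows := ae_eventually_notMem_heavyRowEvent
    (fun i => hindep.precomp (g := fun j => (i, j)) fun _ _ h => (Prod.ext_iff.mp h).2)
    hmeas hδ hM (fun i j => (hentry i j).integrable_iff.mpr hint)
    (fun i j => (hentry i j).integral_eq.le) hW1
  have hcols := ae_eventually_notMem_heavyRowEvent (b := fun j i => a i j)
    (fun j => hindep.precomp (g := fun i => (i, j)) fun _ _ h => (Prod.ext_iff.mp h).1)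
    (fun j i => hmeas i j) hδ hM (fun j i => (hentry i j).integrable_iff.mpr hint)
    (fun j i => (hentry i j).integral_eq.le) hW1
  set K := 3 * (log M + 1) / δ
  have hK : 0 ≤ K := by have := log_nonneg hM; positivity
  filter_upwards [hrows, hcols] with ω hrow hcol
  refine squeeze_zero' (Eventually.of_forall fun n => by positivity)
    ((hrow.and hcol).mono fun n hn => ?_)
    (by simpa only [mul_zero] using (tendsto_add_log_div_sqrt_div_rpow hW1 hWo).const_mul K)
  rw [notMem_heavyRowEvent_iff, notMem_heavyRowEvent_iff] at hn
  have hnorm := norm_toEuclideanCLM_le_of_band (hA n ω) (by positivity)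
    (fun i hi => (hn.1 i hi).le) (fun j hj => (hn.2 j hj).le)
  rw [abs_of_nonneg (sqrt_nonneg _)] at hnorm
  calc _ ≤ K * (W n + log n) / √(W n) / (n : ℝ) ^ ((1 : ℝ) / 4) := by gcongr
    _ = K * ((W n + log n) / √(W n) / (n : ℝ) ^ ((1 : ℝ) / 4)) := by simp only [mul_div_assoc]
end
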